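/- arXiv:2605.19218 — 2 statements merged into one kernel-verified Lean document; each statement's English description precedes it below -/
import Mathlib

section
/- Eckart–Young (projection form): for X ∈ ℝ^{N×d} with C = XᵀX having eigenvalues λ_1 ≥ … ≥ λ_d ≥ 0, the minimum of ‖X − X R_k R_kᵀ‖_F² over R_k ∈ ℝ^{d×k} with orthonormal columns equals Σ_{j>k} λ_j, attained when the columns of R_k are the top-k eigenvectors of C. -/
open Matrix

lemma frob_trace {N d : ℕ} (M : Matrix (Fin N) (Fin d) ℝ) :
    ∑ i, ∑ j, (M i j) ^ 2 = trace (Mᵀ * M) := by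
  rw [Matrix.trace]
  simp only [Matrix.diag, Matrix.mul_apply, Matrix.transpose_apply, sq]
  exact Finset.sum_comm

lemma errA {N d k : ℕ} (X : Matrix (Fin N) (Fin d) ℝ) (lam : Fin d → ℝ)
    (U : Matrix (Fin d) (Fin d) ℝ) (hU : Uᵀ * U = 1)
    (hC : Xᵀ * X = U * diagonal lam * Uᵀ)
    (R : Matrix (Fin d) (Fin k) ℝ) (hR : Rᵀ * R = 1) :
    ∑ i, ∑ j, ((X - X * (R * Rᵀ)) i j) ^ 2
      = ∑ i, lam i * (1 - ∑ j, ((Uᵀ * R) i j) ^ 2) := by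
  have hPP : (R * Rᵀ) * (R * Rᵀ) = R * Rᵀ := by
    rw [Matrix.mul_assoc, ← Matrix.mul_assoc Rᵀ, hR, Matrix.one_mul]
  set P : Matrix (Fin d) (Fin d) ℝ := R * Rᵀ with hP
  have hPsym : Pᵀ = P := by rw [hP, Matrix.transpose_mul, Matrix.transpose_transpose]
  have hM : X - X * P = X * (1 - P) := by rw [Matrix.mul_sub, Matrix.mul_one]
  rw [frob_trace, hM]
  have hMt : (X * (1 - P))ᵀ * (X * (1 - P)) = (1 - P) * (Xᵀ * X) * (1 - P) := by
    rw [Matrix.transpose_mul, Matrix.transpose_sub, Matrix.transpose_one, hPsym,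
      Matrix.mul_assoc, Matrix.mul_assoc, ← Matrix.mul_assoc Xᵀ]
  rw [hMt]
  have h1P : (1 - P) * (1 - P) = 1 - P := by
    rw [Matrix.sub_mul, Matrix.one_mul, Matrix.mul_sub, Matrix.mul_one, hPP, sub_self, sub_zero]
  have hcyc : trace ((1 - P) * (Xᵀ * X) * (1 - P)) = trace ((Xᵀ * X) * (1 - P)) := by
    rw [Matrix.trace_mul_cycle (1 - P) (Xᵀ * X) (1 - P), h1P, Matrix.trace_mul_comm]
  rw [hcyc, Matrix.mul_sub, Matrix.mul_one, Matrix.trace_sub]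
  -- trace C = ∑ lam
  have htrC : trace (Xᵀ * X) = ∑ i, lam i := by
    rw [hC, Matrix.trace_mul_comm, ← Matrix.mul_assoc, hU, Matrix.one_mul, Matrix.trace_diagonal]
  -- trace (C * P) = ∑ i, lam i * s i
  have htrCP : trace ((Xᵀ * X) * P) = ∑ i, lam i * ∑ j, ((Uᵀ * R) i j) ^ 2 := by
    have h1 : (Xᵀ * X) * P = (U * diagonal lam * (Uᵀ * R)) * Rᵀ := by
      rw [hC, hP]; simp only [Matrix.mul_assoc]
    rw [h1, Matrix.trace_mul_comm]
    have h2 : Rᵀ * (U * diagonal lam * (Uᵀ * R)) = (Uᵀ * R)ᵀ * (diagonal lam * (Uᵀ * R)) := by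
      rw [Matrix.transpose_mul, Matrix.transpose_transpose]
      simp only [Matrix.mul_assoc]
    rw [h2, Matrix.trace]
    simp only [Matrix.diag, Matrix.mul_apply, Matrix.transpose_apply, Matrix.diagonal_mul]
    simp only [Matrix.diagonal_apply, ite_mul, zero_mul, Finset.sum_ite_eq,
      Finset.mem_univ, if_true]
    rw [Finset.sum_comm]
    refine Finset.sum_congr rfl fun i _ => ?_
    rw [Finset.mul_sum]
    refine Finset.sum_congr rfl fun j _ => ?_
    ring
  rw [htrC, htrCP, ← Finset.sum_sub_distrib]
  congr 1; funext i; ring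

lemma sSum {d k : ℕ} (Q : Matrix (Fin d) (Fin k) ℝ) (hQ : Qᵀ * Q = 1) :
    ∑ i, ∑ j, (Q i j) ^ 2 = k := by
  rw [Finset.sum_comm]
  have : ∀ j : Fin k, ∑ i, (Q i j) ^ 2 = (Qᵀ * Q) j j := by
    intro j; simp [Matrix.mul_apply, sq]
  simp only [this, hQ]
  simp [Matrix.one_apply]

lemma sLe1 {d k : ℕ} (Q : Matrix (Fin d) (Fin k) ℝ) (hQ : Qᵀ * Q = 1) (i : Fin d) :
    ∑ j, (Q i j) ^ 2 ≤ 1 := by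
  set G : Matrix (Fin d) (Fin d) ℝ := Q * Qᵀ with hG
  have hGG : G * G = G := by
    rw [hG, Matrix.mul_assoc, ← Matrix.mul_assoc Qᵀ, hQ, Matrix.one_mul]
  have hGsym : ∀ a b, G a b = G b a := by
    intro a b; simp [hG, Matrix.mul_apply, mul_comm]
  have hs : ∑ j, (Q i j) ^ 2 = G i i := by simp [hG, Matrix.mul_apply, sq]
  have hGii : G i i = ∑ j, (G i j) ^ 2 := by
    conv_lhs => rw [← hGG]
    simp only [Matrix.mul_apply, sq]
    exact Finset.sum_congr rfl fun j _ => by rw [hGsym j i]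
  have h1 : (G i i) ^ 2 ≤ ∑ j, (G i j) ^ 2 :=
    Finset.single_le_sum (f := fun j => (G i j) ^ 2) (fun j _ => sq_nonneg _)
      (Finset.mem_univ i)
  have hsq : (G i i) ^ 2 ≤ G i i := le_of_le_of_eq h1 hGii.symm
  rw [hs]; nlinarith [hsq]

lemma countK {d k : ℕ} (hk : k ≤ d) :
    ∑ i : Fin d, (if (i : ℕ) < k then (1 : ℝ) else 0) = k := by
  rw [Fin.sum_univ_eq_sum_range (fun i => if i < k then (1 : ℝ) else 0)]
  have h : (Finset.range d).filter (fun i => i < k) = Finset.range k := by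
    ext i; simp only [Finset.mem_filter, Finset.mem_range]
    constructor
    · exact fun h => h.2
    · exact fun h => ⟨lt_of_lt_of_le h hk, h⟩
  rw [Finset.sum_ite, Finset.sum_const, Finset.sum_const_zero, add_zero, h,
    Finset.card_range, nsmul_eq_mul, mul_one]

lemma keyIneq {d k : ℕ} (hk : k ≤ d) (lam s : Fin d → ℝ) (hanti : Antitone lam)
    (hnn : ∀ i, 0 ≤ lam i) (hs0 : ∀ i, 0 ≤ s i) (hs1 : ∀ i, s i ≤ 1)
    (hsum : ∑ i, s i = k) :
    ∑ j : Fin d, (if k ≤ (j : ℕ) then lam j else 0) ≤ ∑ i, lam i * (1 - s i) := by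
  set t : ℝ := if h : k < d then lam ⟨k, h⟩ else 0 with ht
  have hpt : ∀ i : Fin d, (if k ≤ (i : ℕ) then lam i else 0)
      ≤ lam i * (1 - s i) + t * (s i - if (i : ℕ) < k then 1 else 0) := by
    intro i
    by_cases hik : (i : ℕ) < k
    · rw [if_neg (by omega), if_pos hik]
      have htl : t ≤ lam i := by
        rw [ht]
        split
        · exact hanti (by simp [Fin.le_def]; omega)
        · exact hnn i
      nlinarith [mul_nonneg (sub_nonneg.2 htl) (sub_nonneg.2 (hs1 i))]
    · rw [if_pos (by omega), if_neg hik]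
      have hkd : k < d := lt_of_le_of_lt (by omega : k ≤ (i : ℕ)) i.isLt
      have hlt : lam i ≤ t := by
        rw [ht, dif_pos hkd]
        exact hanti (by simp [Fin.le_def]; omega)
      nlinarith [mul_nonneg (sub_nonneg.2 hlt) (hs0 i)]
  calc ∑ j : Fin d, (if k ≤ (j : ℕ) then lam j else 0)
      ≤ ∑ i, (lam i * (1 - s i) + t * (s i - if (i : ℕ) < k then 1 else 0)) :=
        Finset.sum_le_sum fun i _ => hpt i
    _ = ∑ i, lam i * (1 - s i) := by
        rw [Finset.sum_add_distrib, ← Finset.mul_sum, Finset.sum_sub_distrib, hsum,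
          countK hk, sub_self, mul_zero, add_zero]

/-- Eckart–Young in projection form: the squared Frobenius error of the best rank-k
orthogonal projection of the rows of `X` equals the sum of the discarded eigenvalues,
and is attained by the top-k eigenvectors. -/
theorem eckart_young_projection (N d k : ℕ) (hk : k ≤ d)
    (X : Matrix (Fin N) (Fin d) ℝ)
    (lam : Fin d → ℝ) (hanti : Antitone lam) (hnn : ∀ i, 0 ≤ lam i)
    (U : Matrix (Fin d) (Fin d) ℝ) (hU : Uᵀ * U = 1)
    (hC : Xᵀ * X = U * diagonal lam * Uᵀ) :
    IsLeast { e : ℝ | ∃ Rk : Matrix (Fin d) (Fin k) ℝ, Rkᵀ * Rk = 1 ∧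
        e = ∑ i, ∑ j, ((X - X * (Rk * Rkᵀ)) i j) ^ 2 }
      (∑ j : Fin d, if k ≤ (j : ℕ) then lam j else 0) ∧
    (∑ i, ∑ j, ((X - X * (U.submatrix id (Fin.castLE hk) *
          (U.submatrix id (Fin.castLE hk))ᵀ)) i j) ^ 2)
      = ∑ j : Fin d, if k ≤ (j : ℕ) then lam j else 0 := by
  have hUU : U * Uᵀ = 1 := mul_eq_one_comm.mp hU
  set R0 : Matrix (Fin d) (Fin k) ℝ := U.submatrix id (Fin.castLE hk) with hR0def
  have hR0 : R0ᵀ * R0 = 1 := by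
    ext a b
    have h := congrFun (congrFun hU (Fin.castLE hk a)) (Fin.castLE hk b)
    simp only [Matrix.mul_apply, Matrix.transpose_apply, Matrix.one_apply] at h ⊢
    simp only [hR0def, Matrix.submatrix_apply, id_eq]
    rw [h]
    simp [Fin.castLE_inj]
  have hQ0 : ∀ i j, (Uᵀ * R0) i j = if (i : ℕ) = (j : ℕ) then 1 else 0 := by
    intro i j
    have h := congrFun (congrFun hU i) (Fin.castLE hk j)
    simp only [Matrix.mul_apply, Matrix.transpose_apply, Matrix.one_apply] at h ⊢
    simp only [hR0def, Matrix.submatrix_apply, id_eq]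
    rw [h]
    congr 1
    simp [Fin.ext_iff]
  have hs0eq : ∀ i : Fin d, ∑ j, ((Uᵀ * R0) i j) ^ 2 = if (i : ℕ) < k then 1 else 0 := by
    intro i
    simp only [hQ0]
    have : ∀ j : Fin k, ((if (i : ℕ) = (j : ℕ) then (1 : ℝ) else 0)) ^ 2
        = if (i : ℕ) = (j : ℕ) then (1 : ℝ) else 0 := by
      intro j; split <;> norm_num
    simp only [this]
    rw [Fin.sum_univ_eq_sum_range (fun j => if (i : ℕ) = j then (1 : ℝ) else 0)]
    rw [Finset.sum_ite_eq (Finset.range k) (i : ℕ) (fun _ => (1 : ℝ))]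
    simp [Finset.mem_range]
  have hAtt : (∑ i, ∑ j, ((X - X * (R0 * R0ᵀ)) i j) ^ 2)
      = ∑ j : Fin d, if k ≤ (j : ℕ) then lam j else 0 := by
    rw [errA X lam U hU hC R0 hR0]
    refine Finset.sum_congr rfl fun i _ => ?_
    rw [hs0eq i]
    rcases lt_or_ge (i : ℕ) k with h | h
    · rw [if_pos h, if_neg (by omega)]; ring
    · rw [if_neg (by omega), if_pos (by omega)]; ring
  refine ⟨⟨⟨R0, hR0, hAtt.symm⟩, ?_⟩, hAtt⟩
  rintro e ⟨R, hR, rfl⟩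
  rw [errA X lam U hU hC R hR]
  have hQ : (Uᵀ * R)ᵀ * (Uᵀ * R) = 1 := by
    rw [Matrix.transpose_mul, Matrix.transpose_transpose, Matrix.mul_assoc,
      ← Matrix.mul_assoc U, hUU, Matrix.one_mul, hR]
  exact keyIneq hk lam (fun i => ∑ j, ((Uᵀ * R) i j) ^ 2) hanti hnn
    (fun i => Finset.sum_nonneg fun j _ => sq_nonneg _)
    (fun i => sLe1 _ hQ i) (sSum _ hQ)
end

section
/- Online-softmax merge correctness: given two disjoint blocks of scores s⁽¹⁾ ∈ ℝ^{n₁}, s⁽²⁾ ∈ ℝ^{n₂} with block statistics m_j = max_i s⁽ʲ⁾_i, ℓ_j = Σ_i exp(s⁽ʲ⁾_i − m_j), and acc_j = Σ_i exp(s⁽ʲ⁾_i − m_j) v_i⁽ʲ⁾, define m = max(m₁,m₂), ℓ = e^{m₁−m}ℓ₁ + e^{m₂−m}ℓ₂, acc = e^{m₁−m}acc₁ + e^{m₂−m}acc₂. Then acc/ℓ equals the softmax-weighted average Σ exp(s_i) v_i / Σ exp(s_i) over the concatenated scores s = [s⁽¹⁾; s⁽²⁾]. -/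
/-- Online-softmax merge correctness over two nonempty blocks of scores with
associated value vectors. -/
theorem online_softmax_merge (n₁ n₂ p : ℕ) (hn₁ : 0 < n₁) (hn₂ : 0 < n₂)
    (s₁ : Fin n₁ → ℝ) (s₂ : Fin n₂ → ℝ)
    (v₁ : Fin n₁ → Fin p → ℝ) (v₂ : Fin n₂ → Fin p → ℝ)
    (m₁ m₂ : ℝ)
    (hm₁ : IsGreatest (Set.range s₁) m₁) (hm₂ : IsGreatest (Set.range s₂) m₂)
    (ℓ₁ ℓ₂ : ℝ) (acc₁ acc₂ : Fin p → ℝ)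
    (hℓ₁ : ℓ₁ = ∑ i, Real.exp (s₁ i - m₁)) (hℓ₂ : ℓ₂ = ∑ i, Real.exp (s₂ i - m₂))
    (hacc₁ : acc₁ = ∑ i, Real.exp (s₁ i - m₁) • v₁ i)
    (hacc₂ : acc₂ = ∑ i, Real.exp (s₂ i - m₂) • v₂ i)
    (m ℓ : ℝ) (acc : Fin p → ℝ)
    (hm : m = max m₁ m₂)
    (hℓ : ℓ = Real.exp (m₁ - m) * ℓ₁ + Real.exp (m₂ - m) * ℓ₂)
    (hacc : acc = Real.exp (m₁ - m) • acc₁ + Real.exp (m₂ - m) • acc₂) :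
    ℓ⁻¹ • acc
      = (∑ i : Fin n₁ ⊕ Fin n₂, Real.exp (Sum.elim s₁ s₂ i))⁻¹ •
          ∑ i : Fin n₁ ⊕ Fin n₂, Real.exp (Sum.elim s₁ s₂ i) • Sum.elim v₁ v₂ i := by
  subst hℓ₁ hℓ₂ hacc₁ hacc₂ hℓ hacc
  funext j
  simp only [Pi.smul_apply, Pi.add_apply, Finset.sum_apply, smul_eq_mul,
    Fintype.sum_sum_type, Sum.elim_inl, Sum.elim_inr]
  have hexp : ∀ a : ℝ, Real.exp (a - m) * Real.exp (m - a) = 1 := fun a => by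
    rw [← Real.exp_add]; simp
  have key : ∀ (b : ℝ) (x : ℝ), Real.exp (b - m) * Real.exp (x - b) = Real.exp (-m) * Real.exp x := by
    intro b x
    rw [← Real.exp_add, ← Real.exp_add]; ring_nf
  have h1 : Real.exp (m₁ - m) * ∑ i, Real.exp (s₁ i - m₁)
      = Real.exp (-m) * ∑ i, Real.exp (s₁ i) := by
    rw [Finset.mul_sum, Finset.mul_sum]; exact Finset.sum_congr rfl fun i _ => key _ _
  have h2 : Real.exp (m₂ - m) * ∑ i, Real.exp (s₂ i - m₂)
      = Real.exp (-m) * ∑ i, Real.exp (s₂ i) := by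
    rw [Finset.mul_sum, Finset.mul_sum]; exact Finset.sum_congr rfl fun i _ => key _ _
  have h3 : Real.exp (m₁ - m) * ∑ i, Real.exp (s₁ i - m₁) * v₁ i j
      = Real.exp (-m) * ∑ i, Real.exp (s₁ i) * v₁ i j := by
    rw [Finset.mul_sum, Finset.mul_sum]
    exact Finset.sum_congr rfl fun i _ => by rw [← mul_assoc, key, mul_assoc]
  have h4 : Real.exp (m₂ - m) * ∑ i, Real.exp (s₂ i - m₂) * v₂ i j
      = Real.exp (-m) * ∑ i, Real.exp (s₂ i) * v₂ i j := by
    rw [Finset.mul_sum, Finset.mul_sum]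
    exact Finset.sum_congr rfl fun i _ => by rw [← mul_assoc, key, mul_assoc]
  have hS : (0:ℝ) < ∑ i, Real.exp (s₁ i) + ∑ i, Real.exp (s₂ i) := by
    have : Nonempty (Fin n₁) := Fin.pos_iff_nonempty.mp hn₁
    have : Nonempty (Fin n₂) := Fin.pos_iff_nonempty.mp hn₂
    positivity
  rw [h1, h2, h3, h4, ← mul_add, ← mul_add, mul_inv]
  have hne : Real.exp (-m) ≠ 0 := Real.exp_ne_zero _
  field_simp
end
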